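/- arXiv:1602.08982 — 2 statements merged into one kernel-verified Lean document; each statement's English description precedes it below -/
import Mathlib

section
/- The Weierstrass function f(x) = ∑_{n=0}^∞ b^n cos(a^n π x), with 0 < b < 1, a an odd positive integer, and ab > 1 + 3π/2, is continuous on ℝ but nowhere differentiable. -/
/-!
Weierstrass's original argument. Fix `x` and `m`, write `aᵐ x = N + t` with `N` the nearest
integer to `aᵐ x`, and compare `x` with `y = (N + 1) / aᵐ`, so that `0 < y - x ≤ 3 / (2 aᵐ)`.
The first `m` terms of the series move by at most `π (y - x) (ab)ᵐ / (ab - 1)`, since `cos` is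
`1`-Lipschitz. For `n = k + m` we have `aⁿ π y = aᵏ (N + 1) π` and `aⁿ π x = aᵏ N π + aᵏ π t`, and
`aᵏ` is odd, so the tail of the difference is `-(-1)ᴺ bᵐ ∑ bᵏ (1 + cos (aᵏ π t))`: a series of
nonnegative terms whose first term is at least `1`, because `|t| ≤ 1/2`. Hence the difference
quotient is at least `(ab)ᵐ (2/3 - π / (ab - 1))`, which tends to infinity when `ab > 1 + 3π/2`.
-/

open Real Filter Topology Finset

lemma not_differentiableAt_of_tendsto_norm_slope {𝕜 F : Type*} [NontriviallyNormedField 𝕜]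
    [NormedAddCommGroup F] [NormedSpace 𝕜 F] {f : 𝕜 → F} {x : 𝕜} {y : ℕ → 𝕜}
    (hy : Tendsto y atTop (𝓝[≠] x)) (hslope : Tendsto (fun m => ‖slope f x (y m)‖) atTop atTop) :
    ¬ DifferentiableAt 𝕜 f x := fun hf =>
  not_tendsto_atTop_of_tendsto_nhds
    ((hasDerivAt_iff_tendsto_slope.mp hf.hasDerivAt).comp hy).norm hslope

noncomputable def weierstrassTerm (a b x : ℝ) (n : ℕ) : ℝ := b ^ n * cos (a ^ n * π * x)

noncomputable def weierstrassFun (a b x : ℝ) : ℝ := ∑' n, weierstrassTerm a b x n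

lemma norm_weierstrassTerm_le (a b x : ℝ) (n : ℕ) : ‖weierstrassTerm a b x n‖ ≤ |b| ^ n := by
  rw [weierstrassTerm, norm_mul, norm_pow, norm_eq_abs, norm_eq_abs]
  exact mul_le_of_le_one_right (by positivity) (abs_cos_le_one _)

lemma summable_weierstrassTerm {b : ℝ} (hb : |b| < 1) (a x : ℝ) :
    Summable (weierstrassTerm a b x) :=
  .of_norm_bounded (summable_geometric_of_lt_one (abs_nonneg b) hb)
    (norm_weierstrassTerm_le a b x)

lemma continuous_weierstrassFun {b : ℝ} (hb : |b| < 1) (a : ℝ) :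
    Continuous (weierstrassFun a b) :=
  continuous_tsum (fun n => by unfold weierstrassTerm; fun_prop)
    (summable_geometric_of_lt_one (abs_nonneg b) hb) (fun n x => norm_weierstrassTerm_le a b x n)

lemma abs_sum_range_weierstrassTerm_sub_le (a b x y : ℝ) (m : ℕ) :
    |∑ n ∈ range m, (weierstrassTerm a b y n - weierstrassTerm a b x n)|
      ≤ π * |y - x| * ∑ n ∈ range m, |a * b| ^ n := by
  rw [mul_sum]
  refine (abs_sum_le_sum_abs _ _).trans (sum_le_sum fun n _ => ?_)
  calc |weierstrassTerm a b y n - weierstrassTerm a b x n|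
      = |b| ^ n * |cos (a ^ n * π * y) - cos (a ^ n * π * x)| := by
        rw [weierstrassTerm, weierstrassTerm, ← mul_sub, abs_mul, abs_pow]
    _ ≤ |b| ^ n * |a ^ n * π * y - a ^ n * π * x| := by
        gcongr ?_ * ?_; exact abs_cos_sub_cos_le _ _
    _ = π * |y - x| * |a * b| ^ n := by
        rw [← mul_sub, abs_mul, abs_mul, abs_pow, abs_mul, abs_of_pos pi_pos]; ring

lemma geom_sum_le_pow_div_sub_one {r : ℝ} (hr : 1 < r) (m : ℕ) :
    ∑ n ∈ range m, r ^ n ≤ r ^ m / (r - 1) := by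
  rw [geom_sum_eq hr.ne']
  gcongr
  linarith

lemma cos_odd_pow_mul_pi_mul_int_add {a : ℕ} (ha : Odd a) (k : ℕ) (N : ℤ) (t : ℝ) :
    cos ((a : ℝ) ^ k * π * (N + t)) = (-1) ^ N * cos ((a : ℝ) ^ k * π * t) := by
  have hpow : Odd ((a : ℤ) ^ k) := (Int.odd_coe_nat _).mpr ha |>.pow
  have : (a : ℝ) ^ k * π * (N + t) = (a : ℝ) ^ k * π * t + (((a : ℤ) ^ k * N : ℤ) : ℝ) * π := by
    push_cast; ring
  rw [this, cos_add_int_mul_pi, zpow_mul, hpow.neg_one_zpow]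

lemma weierstrassTerm_sub_of_odd {a : ℕ} (ha : Odd a) (b : ℝ) (N : ℤ) (t : ℝ) (m k : ℕ) :
    weierstrassTerm a b ((N + 1) / a ^ m) (k + m) - weierstrassTerm a b ((N + t) / a ^ m) (k + m)
      = -((-1) ^ N * b ^ m) * (b ^ k * (1 + cos ((a : ℝ) ^ k * π * t))) := by
  have hscale (z : ℝ) : (a : ℝ) ^ (k + m) * π * (z / a ^ m) = a ^ k * π * z := by
    have : (a : ℝ) ^ m ≠ 0 := pow_ne_zero _ (Nat.cast_ne_zero.mpr ha.pos.ne')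
    field_simp; ring
  have hcos : cos ((a : ℝ) ^ k * π * (N + 1)) = -(-1) ^ N := by
    simpa [zpow_add_one₀] using cos_odd_pow_mul_pi_mul_int_add ha k (N + 1) 0
  rw [weierstrassTerm, weierstrassTerm, hscale, hscale, hcos, cos_odd_pow_mul_pi_mul_int_add ha,
    pow_add]
  ring

lemma one_le_tsum_pow_mul_one_add_cos {b : ℝ} (hb0 : 0 ≤ b) (hb1 : b < 1) (a : ℝ) {t : ℝ}
    (ht : |t| ≤ 1 / 2) : 1 ≤ ∑' k : ℕ, b ^ k * (1 + cos (a ^ k * π * t)) := by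
  have hnonneg (k : ℕ) : 0 ≤ b ^ k * (1 + cos (a ^ k * π * t)) :=
    mul_nonneg (pow_nonneg hb0 k) (by linarith [neg_one_le_cos (a ^ k * π * t)])
  have hsum : Summable fun k : ℕ => b ^ k * (1 + cos (a ^ k * π * t)) := by
    simp_rw [mul_one_add]
    exact (summable_geometric_of_lt_one hb0 hb1).add
      (summable_weierstrassTerm (by rwa [abs_of_nonneg hb0]) a t)
  have hcos : 0 ≤ cos (π * t) := by
    obtain ⟨h₁, h₂⟩ := abs_le.mp ht
    apply cos_nonneg_of_mem_Icc
    constructor <;> nlinarith [pi_pos]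
  calc 1 ≤ b ^ 0 * (1 + cos (a ^ 0 * π * t)) := by simpa using hcos
    _ ≤ _ := hsum.le_tsum 0 fun k _ => hnonneg k

lemma pow_le_abs_tsum_weierstrassTerm_sub {a : ℕ} (ha : Odd a) {b : ℝ} (hb0 : 0 ≤ b) (hb1 : b < 1)
    (N : ℤ) {t : ℝ} (ht : |t| ≤ 1 / 2) (m : ℕ) :
    b ^ m ≤ |∑' k, (weierstrassTerm a b ((N + 1) / a ^ m) (k + m)
      - weierstrassTerm a b ((N + t) / a ^ m) (k + m))| := by
  have hT := one_le_tsum_pow_mul_one_add_cos hb0 hb1 a ht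
  simp_rw [weierstrassTerm_sub_of_odd ha, tsum_mul_left, abs_mul, abs_neg, abs_mul, abs_zpow,
    abs_neg, abs_one, one_zpow, one_mul, abs_of_nonneg (pow_nonneg hb0 m),
    abs_of_nonneg (zero_le_one.trans hT)]
  exact le_mul_of_one_le_right (pow_nonneg hb0 m) hT

lemma exists_abs_slope_weierstrassFun_ge {a : ℕ} (ha : Odd a) {b : ℝ} (hb0 : 0 ≤ b) (hb1 : b < 1)
    (hab : 1 < a * b) (x : ℝ) (m : ℕ) :
    ∃ y, 0 < y - x ∧ y - x ≤ 3 / 2 / a ^ m ∧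
      (a * b) ^ m * (2 / 3 - π / (a * b - 1)) ≤ |slope (weierstrassFun a b) x y| := by
  have ham : (0 : ℝ) < a ^ m := pow_pos (Nat.cast_pos.mpr ha.pos) m
  set N := round ((a : ℝ) ^ m * x)
  set t := (a : ℝ) ^ m * x - N
  have ht : |t| ≤ 1 / 2 := abs_sub_round _
  obtain ⟨ht₁, ht₂⟩ := abs_le.mp ht
  have hx : x = (N + t) / a ^ m := by field_simp; ring
  set y : ℝ := (N + 1) / a ^ m
  have hyx : y - x = (1 - t) / a ^ m := by rw [hx]; ring
  have hpos : 0 < y - x := by rw [hyx]; exact div_pos (by linarith) ham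
  have hle : y - x ≤ 3 / 2 / a ^ m := by rw [hyx]; gcongr; linarith
  refine ⟨y, hpos, hle, ?_⟩
  have hsum (z : ℝ) := summable_weierstrassTerm (by rwa [abs_of_nonneg hb0]) a z
  have hsplit : weierstrassFun a b y - weierstrassFun a b x
      = ∑ n ∈ range m, (weierstrassTerm a b y n - weierstrassTerm a b x n)
        + ∑' k, (weierstrassTerm a b y (k + m) - weierstrassTerm a b x (k + m)) := by
    rw [weierstrassFun, weierstrassFun, ← (hsum y).tsum_sub (hsum x),
      ((hsum y).sub (hsum x)).sum_add_tsum_nat_add m]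
  have hhead := (abs_sum_range_weierstrassTerm_sub_le a b x y m).trans
    (mul_le_mul_of_nonneg_left (geom_sum_le_pow_div_sub_one
      (by rwa [abs_of_pos (by linarith)]) m) (by positivity))
  rw [abs_of_pos (by linarith : 0 < (a : ℝ) * b), abs_of_pos hpos] at hhead
  have htail := pow_le_abs_tsum_weierstrassTerm_sub ha hb0 hb1 N ht m
  rw [← hx] at htail
  set head := ∑ n ∈ range m, (weierstrassTerm a b y n - weierstrassTerm a b x n)
  set tail := ∑' k, (weierstrassTerm a b y (k + m) - weierstrassTerm a b x (k + m))
  have hrev : |tail| - |head| ≤ |head + tail| := by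
    simpa [add_comm] using abs_sub_abs_le_abs_sub tail (-head)
  have hscale : (a * b) ^ m * (y - x) ≤ 3 / 2 * b ^ m := by
    calc (a * b) ^ m * (y - x) ≤ (a * b) ^ m * (3 / 2 / a ^ m) := by gcongr
      _ = 3 / 2 * b ^ m := by rw [mul_pow]; field_simp
  rw [slope_def_field, hsplit, abs_div, abs_of_pos hpos, le_div_iff₀ hpos]
  calc (a * b) ^ m * (2 / 3 - π / (a * b - 1)) * (y - x)
      = 2 / 3 * ((a * b) ^ m * (y - x)) - π * (y - x) * ((a * b) ^ m / (a * b - 1)) := by ring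
    _ ≤ |head + tail| := by linarith

theorem weierstrass_nowhere_differentiable_general (a : ℕ) (b : ℝ)
    (hb0 : 0 < b) (hb1 : b < 1) (ha : Odd a)
    (hab : (a : ℝ) * b > 1 + 3 * Real.pi / 2)
    (f : ℝ → ℝ)
    (hf : ∀ x, f x = ∑' n : ℕ, b ^ n * Real.cos ((a : ℝ) ^ n * Real.pi * x)) :
    Continuous f ∧ ∀ x : ℝ, ¬ DifferentiableAt ℝ f x := by
  obtain rfl : f = weierstrassFun a b := funext hf
  have hab₁ : 1 < (a : ℝ) * b := by linarith [pi_pos]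
  have ha₁ : 1 < (a : ℝ) := by nlinarith
  have hc : 0 < 2 / 3 - π / (a * b - 1) := by
    rw [sub_pos, div_lt_iff₀ (by linarith)]; linarith
  refine ⟨continuous_weierstrassFun (by rwa [abs_of_pos hb0]) a, fun x => ?_⟩
  choose y hpos hle hslope using exists_abs_slope_weierstrassFun_ge ha hb0.le hb1 hab₁ x
  have hyx : Tendsto (fun m => y m - x) atTop (𝓝 0) :=
    squeeze_zero (fun m => (hpos m).le) hle
      (tendsto_const_nhds.div_atTop (tendsto_pow_atTop_atTop_of_one_lt ha₁))
  refine not_differentiableAt_of_tendsto_norm_slope (tendsto_nhdsWithin_iff.mpr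
    ⟨tendsto_sub_nhds_zero_iff.mp hyx, .of_forall fun m => (sub_pos.mp (hpos m)).ne'⟩) ?_
  exact tendsto_atTop_mono hslope ((tendsto_pow_atTop_atTop_of_one_lt hab₁).atTop_mul_const hc)

/-- Weierstrass's continuous nowhere differentiable function. -/
theorem weierstrass_nowhere_differentiable (a : ℕ) (b : ℝ)
    (hb0 : 0 < b) (hb1 : b < 1) (ha : Odd a) (hapos : 0 < a)
    (hab : (a : ℝ) * b > 1 + 3 * Real.pi / 2)
    (f : ℝ → ℝ)
    (hf : ∀ x, f x = ∑' n : ℕ, b ^ n * Real.cos ((a : ℝ) ^ n * Real.pi * x)) :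
    Continuous f ∧ ∀ x : ℝ, ¬ DifferentiableAt ℝ f x :=
  weierstrass_nowhere_differentiable_general a b hb0 hb1 ha hab f hf
end

section
/- The regular 17-gon is constructible with straightedge and compass; equivalently, cos(2π/17) lies in a field obtained from ℚ by a tower of quadratic extensions (it is constructible as a real number). -/
/-- The constructible real numbers: the smallest subset of ℝ containing the rationals
and closed under field operations and taking square roots of nonnegative elements. -/
inductive ConstructibleReal : ℝ → Prop
  | rat (q : ℚ) : ConstructibleReal q
  | add {x y : ℝ} : ConstructibleReal x → ConstructibleReal y → ConstructibleReal (x + y)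
  | neg {x : ℝ} : ConstructibleReal x → ConstructibleReal (-x)
  | mul {x y : ℝ} : ConstructibleReal x → ConstructibleReal y → ConstructibleReal (x * y)
  | inv {x : ℝ} : ConstructibleReal x → ConstructibleReal x⁻¹
  | sqrt {x : ℝ} : ConstructibleReal x → 0 ≤ x → ConstructibleReal (Real.sqrt x)

private lemma CR_ofRat (q : ℚ) {x : ℝ} (h : (q : ℝ) = x) : ConstructibleReal x :=
  h ▸ ConstructibleReal.rat q

/-- If `d = (2x - a)^2` with `a ≤ 2x`, then `x = (a + √d)/2` is constructible whenever
`a` and `d` are. -/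
private lemma CR_quad {a d x : ℝ} (ha : ConstructibleReal a) (hd : ConstructibleReal d)
    (hsq : d = (2 * x - a) ^ 2) (hge : a ≤ 2 * x) : ConstructibleReal x := by
  have h0 : 0 ≤ d := hsq ▸ sq_nonneg _
  have hs : Real.sqrt d = 2 * x - a := by
    rw [hsq]; exact Real.sqrt_sq (by linarith)
  have hx : x = (a + Real.sqrt d) * (2 : ℝ)⁻¹ := by rw [hs]; ring
  rw [hx]
  exact ConstructibleReal.mul (ConstructibleReal.add ha (ConstructibleReal.sqrt hd h0))
    (ConstructibleReal.inv (CR_ofRat 2 (by norm_num)))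

private noncomputable def th : ℝ := 2 * Real.pi / 17

/-- `C k = cos (k · 2π/17)`. -/
private noncomputable def C (k : ℝ) : ℝ := Real.cos (k * th)

private lemma C_prod (a b : ℝ) : C a * C b = (C (a + b) + C (a - b)) / 2 := by
  unfold C
  have h := Real.two_mul_cos_mul_cos (a * th) (b * th)
  rw [show a * th - b * th = (a - b) * th by ring,
      show a * th + b * th = (a + b) * th by ring] at h
  linarith

private lemma C_reduce (k : ℝ) : C (17 - k) = C k := by
  unfold C
  rw [show (17 - k) * th = 2 * Real.pi - k * th by unfold th; ring, Real.cos_two_pi_sub]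

private lemma C_lt (k m : ℝ) (hk : 0 ≤ k) (hm : m ≤ 17 / 2) (hkm : k < m) : C m < C k := by
  unfold C
  have hpi := Real.pi_pos
  have hth : 0 < th := by unfold th; positivity
  apply Real.cos_lt_cos_of_nonneg_of_le_pi
  · positivity
  · unfold th; nlinarith
  · nlinarith

private lemma C_pos (k : ℝ) (hk : 0 ≤ k) (hk2 : k < 17 / 4) : 0 < C k := by
  unfold C
  have hpi := Real.pi_pos
  have hth : 0 < th := by unfold th; positivity
  apply Real.cos_pos_of_mem_Ioo
  constructor
  · nlinarith
  · unfold th; nlinarith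

/-- The key linear relation: `cos θ + cos 2θ + ⋯ + cos 8θ = -1/2` for `θ = 2π/17`. -/
private lemma sumC : C 1 + C 2 + C 3 + C 4 + C 5 + C 6 + C 7 + C 8 = -(1/2) := by
  have hpi := Real.pi_pos
  have hs : (0:ℝ) < Real.sin (th / 2) := by
    rw [show th / 2 = Real.pi / 17 by unfold th; ring]
    apply Real.sin_pos_of_pos_of_lt_pi <;> nlinarith
  have key : ∀ k : ℝ, 2 * C k * Real.sin (th / 2)
      = Real.sin ((2*k+1)/2 * th) - Real.sin ((2*k-1)/2 * th) := by
    intro k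
    rw [show (2*k+1)/2 * th = k * th + th/2 by ring,
        show (2*k-1)/2 * th = k * th - th/2 by ring, Real.sin_add, Real.sin_sub]
    unfold C; ring
  have e1 := key 1; have e2 := key 2; have e3 := key 3; have e4 := key 4
  have e5 := key 5; have e6 := key 6; have e7 := key 7; have e8 := key 8
  norm_num at e1 e2 e3 e4 e5 e6 e7 e8
  have h17 : Real.sin (17/2 * th) = 0 := by
    rw [show (17/2 : ℝ) * th = Real.pi by unfold th; ring, Real.sin_pi]
  have h12 : Real.sin ((1:ℝ)/2 * th) = Real.sin (th / 2) := by ring_nf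
  have total : (C 1 + C 2 + C 3 + C 4 + C 5 + C 6 + C 7 + C 8 + 1/2)
      * (2 * Real.sin (th / 2)) = 0 := by
    nlinarith [e1, e2, e3, e4, e5, e6, e7, e8, h17, h12]
  rcases mul_eq_zero.mp total with h | h
  · linarith
  · linarith

/-- Gauss: the regular 17-gon is constructible, i.e. `cos (2π/17)` is a constructible real. -/
theorem cos_two_pi_div_seventeen_constructible :
    ConstructibleReal (Real.cos (2 * Real.pi / 17)) := by
  have hS := sumC
  -- reduction facts
  have r9 : C 9 = C 8 := by have := C_reduce 8; norm_num at this; exact this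
  have r10 : C 10 = C 7 := by have := C_reduce 7; norm_num at this; exact this
  have r11 : C 11 = C 6 := by have := C_reduce 6; norm_num at this; exact this
  have r12 : C 12 = C 5 := by have := C_reduce 5; norm_num at this; exact this
  have r13 : C 13 = C 4 := by have := C_reduce 4; norm_num at this; exact this
  have r14 : C 14 = C 3 := by have := C_reduce 3; norm_num at this; exact this
  have r15 : C 15 = C 2 := by have := C_reduce 2; norm_num at this; exact this
  -- the product of the two 8-periods (divided by 2) is -1
  have f1 : (C 1 + C 2 + C 4 + C 8) * (C 3 + C 5 + C 6 + C 7) = -1 := by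
    have h13 : C 3 * C 1 = (C 4 + C 2)/2 := by have := C_prod 3 1; norm_num at this; exact this
    have h15 : C 5 * C 1 = (C 6 + C 4)/2 := by have := C_prod 5 1; norm_num at this; exact this
    have h16 : C 6 * C 1 = (C 7 + C 5)/2 := by have := C_prod 6 1; norm_num at this; exact this
    have h17 : C 7 * C 1 = (C 8 + C 6)/2 := by have := C_prod 7 1; norm_num at this; exact this
    have h23 : C 3 * C 2 = (C 5 + C 1)/2 := by have := C_prod 3 2; norm_num at this; exact this
    have h25 : C 5 * C 2 = (C 7 + C 3)/2 := by have := C_prod 5 2; norm_num at this; exact this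
    have h26 : C 6 * C 2 = (C 8 + C 4)/2 := by have := C_prod 6 2; norm_num at this; exact this
    have h27 : C 7 * C 2 = (C 8 + C 5)/2 := by
      have := C_prod 7 2; norm_num at this; rw [r9] at this; exact this
    have h43 : C 4 * C 3 = (C 7 + C 1)/2 := by have := C_prod 4 3; norm_num at this; exact this
    have h45 : C 5 * C 4 = (C 8 + C 1)/2 := by
      have := C_prod 5 4; norm_num at this; rw [r9] at this; exact this
    have h46 : C 6 * C 4 = (C 7 + C 2)/2 := by
      have := C_prod 6 4; norm_num at this; rw [r10] at this; exact this
    have h47 : C 7 * C 4 = (C 6 + C 3)/2 := by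
      have := C_prod 7 4; norm_num at this; rw [r11] at this; exact this
    have h83 : C 8 * C 3 = (C 6 + C 5)/2 := by
      have := C_prod 8 3; norm_num at this; rw [r11] at this; exact this
    have h85 : C 8 * C 5 = (C 4 + C 3)/2 := by
      have := C_prod 8 5; norm_num at this; rw [r13] at this; exact this
    have h86 : C 8 * C 6 = (C 3 + C 2)/2 := by
      have := C_prod 8 6; norm_num at this; rw [r14] at this; exact this
    have h87 : C 8 * C 7 = (C 2 + C 1)/2 := by
      have := C_prod 8 7; norm_num at this; rw [r15] at this; exact this
    linear_combination h13 + h15 + h16 + h17 + h23 + h25 + h26 + h27 + h43 + h45 + h46 +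
      h47 + h83 + h85 + h86 + h87 + 2 * hS
  -- the product of the two 4-periods inside the first 8-period
  have f2 : (C 1 + C 4) * (C 2 + C 8) = -(1/4) := by
    have h12' : C 2 * C 1 = (C 3 + C 1)/2 := by have := C_prod 2 1; norm_num at this; exact this
    have h18 : C 8 * C 1 = (C 8 + C 7)/2 := by
      have := C_prod 8 1; norm_num at this; rw [r9] at this; exact this
    have h42 : C 4 * C 2 = (C 6 + C 2)/2 := by have := C_prod 4 2; norm_num at this; exact this
    have h48 : C 8 * C 4 = (C 5 + C 4)/2 := by
      have := C_prod 8 4; norm_num at this; rw [r12] at this; exact this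
    linear_combination h12' + h18 + h42 + h48 + hS / 2
  -- the product of the two 4-periods inside the second 8-period
  have f3 : (C 3 + C 5) * (C 6 + C 7) = -(1/4) := by
    have h36 : C 6 * C 3 = (C 8 + C 3)/2 := by
      have := C_prod 6 3; norm_num at this; rw [r9] at this; exact this
    have h37 : C 7 * C 3 = (C 7 + C 4)/2 := by
      have := C_prod 7 3; norm_num at this; rw [r10] at this; exact this
    have h56 : C 6 * C 5 = (C 6 + C 1)/2 := by
      have := C_prod 6 5; norm_num at this; rw [r11] at this; exact this
    have h57 : C 7 * C 5 = (C 5 + C 2)/2 := by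
      have := C_prod 7 5; norm_num at this; rw [r12] at this; exact this
    linear_combination h36 + h37 + h56 + h57 + hS / 2
  -- the product of the two elements of the final 2-period
  have f4 : C 1 * C 4 = (C 5 + C 3)/2 := by
    have := C_prod 4 1; norm_num at this; linarith [this]
  -- inequalities
  have hc1 : 0 < C 1 := C_pos 1 (by norm_num) (by norm_num)
  have hc3 : 0 < C 3 := C_pos 3 (by norm_num) (by norm_num)
  have hc72 : 0 < C (7/2) := C_pos (7/2) (by norm_num) (by norm_num)
  have hc4 : 0 < C 4 := C_pos 4 (by norm_num) (by norm_num)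
  have h34 : C 4 < C 3 := C_lt 3 4 (by norm_num) (by norm_num) (by norm_num)
  have h172 : C (7/2) < C 1 := C_lt 1 (7/2) (by norm_num) (by norm_num) (by norm_num)
  have h12lt : C 2 < C 1 := C_lt 1 2 (by norm_num) (by norm_num) (by norm_num)
  have h48lt : C 8 < C 4 := C_lt 4 8 (by norm_num) (by norm_num) (by norm_num)
  have h36lt : C 6 < C 3 := C_lt 3 6 (by norm_num) (by norm_num) (by norm_num)
  have h57lt : C 7 < C 5 := C_lt 5 7 (by norm_num) (by norm_num) (by norm_num)
  have h14lt : C 4 < C 1 := C_lt 1 4 (by norm_num) (by norm_num) (by norm_num)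
  -- positivity of the first 8-period : C1+C2+C4+C8 > 0
  have hApos : 0 < C 1 + C 2 + C 4 + C 8 := by
    have g1 : C 2 + C 4 = 2 * C 3 * C 1 := by
      unfold C
      rw [Real.cos_add_cos, show (2*th + 4*th)/2 = 3*th by ring,
          show (2*th - 4*th)/2 = -(1*th) by ring, Real.cos_neg]
    have g2 : C 1 + C 8 = 2 * (-C 4) * C (7/2) := by
      unfold C
      rw [Real.cos_add_cos, show (1*th + 8*th)/2 = (9/2)*th by ring,
          show (1*th - 8*th)/2 = -((7/2)*th) by ring, Real.cos_neg,
          show (9/2 : ℝ)*th = Real.pi - 4*th by unfold th; ring, Real.cos_pi_sub]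
    nlinarith [g1, g2, hc1, hc3, hc72, hc4, h34, h172]
  -- constructibility of the 8-period A = C1+C2+C4+C8
  have hA : ConstructibleReal (C 1 + C 2 + C 4 + C 8) := by
    refine CR_quad (a := -(1/2)) (d := 17/4) (CR_ofRat (-(1/2)) (by norm_num))
      (CR_ofRat (17/4) (by norm_num)) ?_ (by linarith)
    linear_combination 4 * f1 - (4 * (C 1 + C 2 + C 4 + C 8)) * hS
  -- constructibility of the other 8-period B = C3+C5+C6+C7
  have hB : ConstructibleReal (C 3 + C 5 + C 6 + C 7) := by
    have hBeq : C 3 + C 5 + C 6 + C 7 = -(1/2) + -(C 1 + C 2 + C 4 + C 8) := by linarith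
    rw [hBeq]
    exact ConstructibleReal.add (CR_ofRat (-(1/2)) (by norm_num)) (ConstructibleReal.neg hA)
  -- constructibility of the 4-period P = C1+C4
  have hP : ConstructibleReal (C 1 + C 4) := by
    refine CR_quad (a := C 1 + C 2 + C 4 + C 8)
      (d := (C 1 + C 2 + C 4 + C 8) * (C 1 + C 2 + C 4 + C 8) + 1) hA
      (ConstructibleReal.add (ConstructibleReal.mul hA hA) (CR_ofRat 1 (by norm_num)))
      (by linear_combination 4 * f2) (by linarith)
  -- constructibility of the 4-period R = C3+C5
  have hR : ConstructibleReal (C 3 + C 5) := by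
    refine CR_quad (a := C 3 + C 5 + C 6 + C 7)
      (d := (C 3 + C 5 + C 6 + C 7) * (C 3 + C 5 + C 6 + C 7) + 1) hB
      (ConstructibleReal.add (ConstructibleReal.mul hB hB) (CR_ofRat 1 (by norm_num)))
      (by linear_combination 4 * f3) (by linarith)
  -- constructibility of C 1 = cos (2π/17)
  have hfin : ConstructibleReal (C 1) := by
    refine CR_quad (a := C 1 + C 4)
      (d := (C 1 + C 4) * (C 1 + C 4) + -(2 * (C 3 + C 5))) hP
      (ConstructibleReal.add (ConstructibleReal.mul hP hP)
        (ConstructibleReal.neg (ConstructibleReal.mul (CR_ofRat 2 (by norm_num)) hR)))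
      (by linear_combination 4 * f4) (by linarith)
  have : Real.cos (2 * Real.pi / 17) = C 1 := by unfold C th; rw [one_mul]
  rw [this]
  exact hfin
end
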